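/- arXiv:math/0403218 — 5 statements merged into one kernel-verified Lean document; each statement's English description precedes it below -/
import Mathlib

section
/- The function ψ(z) = log|log|z|²| satisfies the Țițeica equation ψ_{z z̄} + |U|² e^{-2ψ} = 0 on the punctured unit disk, where U = 1/z. -/
/-! Writing `r = x² + y²` and `φ(s) = log (log s)` (Mathlib's `log` is even, so this is
`log |log s|`), the potential is the radial function
`ψ = φ(r)`, whose Laplacian is `4 (r φ''(r) + φ'(r)) = 4 (r φ'(r))'`. Since `r φ'(r) = 1 / log r`,
this gives `ψ_{z z̄} = -1 / (r (log r)²)`, while `|U|² e^{-2ψ} = 1 / (r (log r)²)`. -/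

/-- The model metric potential `ψ(z) = log |log |z|²|`, written in real
coordinates `z = x + iy`, so that `|z|² = x² + y²`. -/
noncomputable def tzPsi (x y : ℝ) : ℝ := Real.log |Real.log (x ^ 2 + y ^ 2)|

open Filter Topology Real

theorem deriv_deriv_comp_sq_add {φ : ℝ → ℝ} {c x : ℝ}
    (hφ : ∀ᶠ s in 𝓝 (x ^ 2 + c), DifferentiableAt ℝ φ s)
    (hφ' : DifferentiableAt ℝ (deriv φ) (x ^ 2 + c)) :
    deriv (fun x' => deriv (fun x'' => φ (x'' ^ 2 + c)) x') x
      = 4 * x ^ 2 * deriv (deriv φ) (x ^ 2 + c) + 2 * deriv φ (x ^ 2 + c) := by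
  have hsq (t : ℝ) : HasDerivAt (fun t => t ^ 2 + c) (2 * t) t := by
    simpa using (hasDerivAt_pow 2 t).add_const c
  have hfirst : (fun x' => deriv (fun x'' => φ (x'' ^ 2 + c)) x')
      =ᶠ[𝓝 x] fun x' => deriv φ (x' ^ 2 + c) * (2 * x') := by
    have hcont : Tendsto (fun t : ℝ => t ^ 2 + c) (𝓝 x) (𝓝 (x ^ 2 + c)) :=
      (continuous_pow 2 |>.add continuous_const).tendsto x
    filter_upwards [hcont.eventually hφ] with t ht
    exact (ht.hasDerivAt.comp t (hsq t)).deriv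
  have hsecond : HasDerivAt (fun x' => deriv φ (x' ^ 2 + c) * (2 * x'))
      (deriv (deriv φ) (x ^ 2 + c) * (2 * x) * (2 * x) + deriv φ (x ^ 2 + c) * 2) x := by
    simpa using (hφ'.hasDerivAt.comp x (hsq x)).fun_mul (hasDerivAt_const_mul 2)
  rw [hfirst.deriv_eq, hsecond.deriv]
  ring

theorem deriv_deriv_add_deriv_deriv_comp_sq_add_sq {φ : ℝ → ℝ} {x y : ℝ}
    (hφ : ∀ᶠ s in 𝓝 (x ^ 2 + y ^ 2), DifferentiableAt ℝ φ s)
    (hφ' : DifferentiableAt ℝ (deriv φ) (x ^ 2 + y ^ 2)) :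
    deriv (fun x' => deriv (fun x'' => φ (x'' ^ 2 + y ^ 2)) x') x
        + deriv (fun y' => deriv (fun y'' => φ (x ^ 2 + y'' ^ 2)) y') y
      = 4 * ((x ^ 2 + y ^ 2) * deriv (deriv φ) (x ^ 2 + y ^ 2) + deriv φ (x ^ 2 + y ^ 2)) := by
  have hswap : (fun y' => deriv (fun y'' => φ (x ^ 2 + y'' ^ 2)) y')
      = fun y' => deriv (fun y'' => φ (y'' ^ 2 + x ^ 2)) y' := by
    simp_rw [add_comm (x ^ 2)]
  rw [hswap, deriv_deriv_comp_sq_add hφ hφ',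
    deriv_deriv_comp_sq_add (by rwa [add_comm]) (by rwa [add_comm]), add_comm (y ^ 2)]
  ring

theorem eventually_ne_zero_and_log_ne_zero {s : ℝ} (hs : s ≠ 0) (hlog : log s ≠ 0) :
    ∀ᶠ t in 𝓝 s, t ≠ 0 ∧ log t ≠ 0 :=
  (eventually_ne_nhds hs).and ((continuousAt_log hs).eventually_ne hlog)

theorem hasDerivAt_log_log {s : ℝ} (hs : s ≠ 0) (hlog : log s ≠ 0) :
    HasDerivAt (fun s => log (log s)) (s * log s)⁻¹ s := by
  rw [mul_inv_rev]
  exact (hasDerivAt_log hlog).comp s (hasDerivAt_log hs)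

theorem hasDerivAt_deriv_log_log {s : ℝ} (hs : s ≠ 0) (hlog : log s ≠ 0) :
    HasDerivAt (deriv fun s => log (log s)) (-(log s + 1) / (s * log s) ^ 2) s := by
  have hderiv : (deriv fun s => log (log s)) =ᶠ[𝓝 s] fun t => (t * log t)⁻¹ := by
    filter_upwards [eventually_ne_zero_and_log_ne_zero hs hlog] with t ht
    exact (hasDerivAt_log_log ht.1 ht.2).deriv
  exact ((hasDerivAt_mul_log hs).inv (mul_ne_zero hs hlog)).congr_of_eventuallyEq hderiv

theorem exp_neg_two_mul_log_abs {L : ℝ} (hL : L ≠ 0) : exp (-2 * log |L|) = (L ^ 2)⁻¹ := by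
  rw [neg_mul, exp_neg, ← sq_abs, ← exp_log (pow_pos (abs_pos.mpr hL) 2), log_pow]
  norm_num

/-- `ψ(z) = log|log|z|²|` solves the Țițeica equation
`ψ_{z z̄} + |U|² e^{-2ψ} = 0` on the punctured unit disk, where `U = 1/z`
(so `|U|² = 1/|z|² = 1/(x²+y²)`) and `ψ_{z z̄} = (1/4)(ψ_{xx} + ψ_{yy})`. -/
theorem titeica_model_solution (x y : ℝ) (h0 : 0 < x ^ 2 + y ^ 2)
    (h1 : x ^ 2 + y ^ 2 < 1) :
    (1 / 4) * (deriv (fun x' => deriv (fun x'' => tzPsi x'' y) x') x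
        + deriv (fun y' => deriv (fun y'' => tzPsi x y'') y') y)
      + (1 / (x ^ 2 + y ^ 2)) * Real.exp (-2 * tzPsi x y) = 0 := by
  have hr : x ^ 2 + y ^ 2 ≠ 0 := h0.ne'
  have hlog : log (x ^ 2 + y ^ 2) ≠ 0 := (log_neg h0 h1).ne
  have hφ : ∀ᶠ s in 𝓝 (x ^ 2 + y ^ 2), DifferentiableAt ℝ (fun s => log (log s)) s := by
    filter_upwards [eventually_ne_zero_and_log_ne_zero hr hlog] with s hs
    exact (hasDerivAt_log_log hs.1 hs.2).differentiableAt
  rw [tzPsi, exp_neg_two_mul_log_abs hlog]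
  simp only [tzPsi, log_abs]
  rw [deriv_deriv_add_deriv_deriv_comp_sq_add_sq hφ
      (hasDerivAt_deriv_log_log hr hlog).differentiableAt,
    (hasDerivAt_deriv_log_log hr hlog).deriv, (hasDerivAt_log_log hr hlog).deriv]
  field_simp
  ring
end

section
/- For α ∈ (-1, 0) and β < 0, the function u(z) = β|log r|^α with r = |z| satisfies L(u) = u_{z z̄} + (e^{-2u} - 1)/(|z|²(log|z|²)²) ≥ 0 on a punctured neighborhood of 0 (with r < 1). -/
/-- The barrier function `u(z) = β |log r|^α` with `r = |z| = √(x² + y²)`. -/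
noncomputable def barrierU (α β x y : ℝ) : ℝ :=
  β * |Real.log (Real.sqrt (x ^ 2 + y ^ 2))| ^ α

/-!
Everything depends on `s = |z|² = x² + y²` only, and for `f(x² + y²)` one has
`u_xx + u_yy = 4 (f' + s f'')`. With `t = -log r = -(log s)/2` this turns `u = β t^α` into
`Δu = β α (α - 1) t^(α-2) / s`, so that `L(u) = (α (α - 1) u + e^{-2u} - 1) / (4 s t²)`.
Since `e^{-2u} ≥ 1 - 2u`, the bracket is at least `u (α + 1) (α - 2)`, which is nonnegative
because `u ≤ 0` and `-1 ≤ α ≤ 2`.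
-/

open Real Filter Topology Set

section Radial

variable {f f' : ℝ → ℝ} {f'' : ℝ}

lemma deriv_deriv_comp_sq_add_s1 {t c : ℝ}
    (hf : ∀ᶠ s in 𝓝 (t ^ 2 + c), HasDerivAt f (f' s) s)
    (hf' : HasDerivAt f' f'' (t ^ 2 + c)) :
    deriv (fun t' => deriv (fun t'' => f (t'' ^ 2 + c)) t') t
      = 2 * f' (t ^ 2 + c) + 4 * t ^ 2 * f'' := by
  have hq : ∀ t', HasDerivAt (fun t'' => t'' ^ 2 + c) (2 * t') t' := fun t' => by
    simpa using (hasDerivAt_pow 2 t').add_const c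
  have hfirst : (fun t' => deriv (fun t'' => f (t'' ^ 2 + c)) t') =ᶠ[𝓝 t]
      fun t' => f' (t' ^ 2 + c) * (2 * t') :=
    ((hq t).continuousAt.tendsto.eventually hf).mono fun t' ht' => (ht'.comp t' (hq t')).deriv
  have hsecond : HasDerivAt (fun t' => f' (t' ^ 2 + c) * (2 * t'))
      (f'' * (2 * t) * (2 * t) + f' (t ^ 2 + c) * 2) t :=
    (hf'.comp t (hq t)).fun_mul ((hasDerivAt_id' t).const_mul 2) |>.congr_deriv
      (by simp only [Function.comp_apply]; ring)
  rw [hfirst.deriv_eq, hsecond.deriv]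
  ring

lemma laplacian_comp_sq_add_sq {x y : ℝ}
    (hf : ∀ᶠ s in 𝓝 (x ^ 2 + y ^ 2), HasDerivAt f (f' s) s)
    (hf' : HasDerivAt f' f'' (x ^ 2 + y ^ 2)) :
    deriv (fun x' => deriv (fun x'' => f (x'' ^ 2 + y ^ 2)) x') x
        + deriv (fun y' => deriv (fun y'' => f (x ^ 2 + y'' ^ 2)) y') y
      = 4 * f' (x ^ 2 + y ^ 2) + 4 * (x ^ 2 + y ^ 2) * f'' := by
  have hswap : (fun y'' => f (x ^ 2 + y'' ^ 2)) = fun y'' => f (y'' ^ 2 + x ^ 2) :=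
    funext fun _ => by rw [add_comm]
  have hx := deriv_deriv_comp_sq_add_s1 hf hf'
  rw [add_comm (x ^ 2)] at hf hf'
  have hy := deriv_deriv_comp_sq_add_s1 hf hf'
  rw [hswap, hx, hy, add_comm (y ^ 2)]
  ring

end Radial

section Profile

variable (α β : ℝ)

noncomputable def barrierProfile (s : ℝ) : ℝ := β * |log s / 2| ^ α

lemma barrierU_eq_barrierProfile (x y : ℝ) :
    barrierU α β x y = barrierProfile α β (x ^ 2 + y ^ 2) := by
  rw [barrierU, barrierProfile, log_sqrt (by positivity)]

variable {α β} {s : ℝ}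

lemma neg_log_div_two_pos (hs : s ∈ Ioo 0 1) : 0 < -log s / 2 := by
  linarith [log_neg hs.1 hs.2]

lemma barrierProfile_of_mem_Ioo (hs : s ∈ Ioo 0 1) :
    barrierProfile α β s = β * (-log s / 2) ^ α := by
  rw [barrierProfile, abs_of_neg (by linarith [neg_log_div_two_pos hs]), neg_div]

lemma hasDerivAt_neg_log_div_two (hs : 0 < s) :
    HasDerivAt (fun s => -log s / 2) (-1 / (2 * s)) s :=
  (hasDerivAt_log hs.ne').fun_neg.div_const 2 |>.congr_deriv (by field_simp)

lemma hasDerivAt_barrierProfile (hs : s ∈ Ioo 0 1) :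
    HasDerivAt (barrierProfile α β) (-(β * α) * (-log s / 2) ^ (α - 1) / (2 * s)) s := by
  have h := ((hasDerivAt_neg_log_div_two hs.1).rpow_const (p := α)
    (Or.inl (neg_log_div_two_pos hs).ne')).const_mul β
  have heq : barrierProfile α β =ᶠ[𝓝 s] fun s => β * (-log s / 2) ^ α := by
    filter_upwards [isOpen_Ioo.mem_nhds hs] with s' hs' using barrierProfile_of_mem_Ioo hs'
  exact (h.congr_of_eventuallyEq heq).congr_deriv (by field_simp)

lemma hasDerivAt_deriv_barrierProfile (hs : s ∈ Ioo 0 1) :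
    HasDerivAt (fun s => -(β * α) * (-log s / 2) ^ (α - 1) / (2 * s))
      (β * α * ((α - 1) * (-log s / 2) ^ (α - 2) + 2 * (-log s / 2) ^ (α - 1)) / (4 * s ^ 2))
      s := by
  have hT := (hasDerivAt_neg_log_div_two hs.1).rpow_const (p := α - 1)
    (Or.inl (neg_log_div_two_pos hs).ne')
  have h := (hT.const_mul (-(β * α))).fun_div ((hasDerivAt_id' s).const_mul 2)
    (by simp [hs.1.ne'])
  refine h.congr_deriv ?_
  rw [show α - 1 - 1 = α - 2 by ring]
  field_simp [hs.1.ne']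
  ring

end Profile

lemma laplacian_barrierU (α β : ℝ) {x y : ℝ} (hs : x ^ 2 + y ^ 2 ∈ Ioo 0 1) :
    deriv (fun x' => deriv (fun x'' => barrierU α β x'' y) x') x
        + deriv (fun y' => deriv (fun y'' => barrierU α β x y'') y') y
      = β * α * (α - 1) * (-log (x ^ 2 + y ^ 2) / 2) ^ (α - 2) / (x ^ 2 + y ^ 2) := by
  have hf : ∀ᶠ s in 𝓝 (x ^ 2 + y ^ 2), HasDerivAt (barrierProfile α β)
      (-(β * α) * (-log s / 2) ^ (α - 1) / (2 * s)) s := by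
    filter_upwards [isOpen_Ioo.mem_nhds hs] with s hs' using hasDerivAt_barrierProfile hs'
  simp only [barrierU_eq_barrierProfile]
  rw [laplacian_comp_sq_add_sq hf (hasDerivAt_deriv_barrierProfile hs),
    rpow_sub_one (neg_log_div_two_pos hs).ne']
  field_simp [hs.1.ne']
  ring

lemma mul_sub_one_mul_add_exp_sub_one_nonneg {α u : ℝ} (hα : α ∈ Icc (-1) 2) (hu : u ≤ 0) :
    0 ≤ α * (α - 1) * u + (exp (-2 * u) - 1) := by
  have hexp : -2 * u + 1 ≤ exp (-2 * u) := add_one_le_exp _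
  have hcoeff : 0 ≤ (α + 1) * (2 - α) := mul_nonneg (by linarith [hα.1]) (by linarith [hα.2])
  nlinarith [mul_nonneg (neg_nonneg.2 hu) hcoeff]

theorem barrier_subsolution_general (α β : ℝ) (hα : α ∈ Set.Ioo (-1 : ℝ) 0) (hβ : β < 0)
    (ε : ℝ) (hε1 : ε < 1) :
    ∀ x y : ℝ, 0 < x ^ 2 + y ^ 2 → Real.sqrt (x ^ 2 + y ^ 2) < ε →
      0 ≤ (1 / 4) * (deriv (fun x' => deriv (fun x'' => barrierU α β x'' y) x') x
            + deriv (fun y' => deriv (fun y'' => barrierU α β x y'') y') y)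
          + (Real.exp (-2 * barrierU α β x y) - 1)
            / ((x ^ 2 + y ^ 2) * (Real.log (x ^ 2 + y ^ 2)) ^ 2) := by
  intro x y h0 hr
  have hs : x ^ 2 + y ^ 2 ∈ Ioo 0 1 := ⟨h0, by simpa using (sqrt_lt' one_pos).1 (hr.trans hε1)⟩
  rw [laplacian_barrierU α β hs, barrierU_eq_barrierProfile, barrierProfile_of_mem_Ioo hs]
  have hT := neg_log_div_two_pos hs
  set T := -log (x ^ 2 + y ^ 2) / 2 with hT_def
  set u := β * T ^ α
  rw [show log (x ^ 2 + y ^ 2) = -2 * T by rw [hT_def]; ring]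
  have hL : 1 / 4 * (β * α * (α - 1) * T ^ (α - 2) / (x ^ 2 + y ^ 2))
        + (exp (-2 * u) - 1) / ((x ^ 2 + y ^ 2) * (-2 * T) ^ 2)
      = (α * (α - 1) * u + (exp (-2 * u) - 1)) / (4 * (x ^ 2 + y ^ 2) * T ^ 2) := by
    rw [rpow_sub hT, rpow_two]
    field_simp
    ring
  rw [hL]
  refine div_nonneg (mul_sub_one_mul_add_exp_sub_one_nonneg ⟨hα.1.le, by linarith [hα.2]⟩ ?_)
    (by positivity)
  exact mul_nonpos_of_nonpos_of_nonneg hβ.le (rpow_nonneg hT.le α)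

/-- For `α ∈ (-1,0)` and `β < 0`, the function `u(z) = β|log r|^α` satisfies
`L(u) = u_{z z̄} + (e^{-2u} - 1)/(|z|²(log|z|²)²) ≥ 0` on a punctured
neighborhood of `0` (with `r < ε < 1`).  Here `u_{z z̄} = (1/4)(u_{xx}+u_{yy})`
and `|z|² = x² + y²`. -/
theorem barrier_subsolution (α β : ℝ) (hα : α ∈ Set.Ioo (-1 : ℝ) 0) (hβ : β < 0)
    (ε : ℝ) (hε0 : 0 < ε) (hε1 : ε < 1) :
    ∀ x y : ℝ, 0 < x ^ 2 + y ^ 2 → Real.sqrt (x ^ 2 + y ^ 2) < ε →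
      0 ≤ (1 / 4) * (deriv (fun x' => deriv (fun x'' => barrierU α β x'' y) x') x
            + deriv (fun y' => deriv (fun y'' => barrierU α β x y'') y') y)
          + (Real.exp (-2 * barrierU α β x y) - 1)
            / ((x ^ 2 + y ^ 2) * (Real.log (x ^ 2 + y ^ 2)) ^ 2) :=
  barrier_subsolution_general α β hα hβ ε hε1
end

section
/- For real r, ρ > 0 with r ≠ ρ, the integral ∫₀^{2π} (2r - 2ρ cos φ)/(r² + ρ² - 2rρ cos φ) dφ equals 4π/r if ρ < r and equals 0 if r < ρ. -/
/-!
The integrand is `(1 + P φ) / r` with `P φ = (r² - ρ²) / (r² + ρ² - 2rρ cos φ)`, the Poisson kernel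
of the disc of radius `r` at the point `ρ`. When `ρ < r`, the Poisson formula for the constant
function `1` gives `∫ P = 2π`; when `r < ρ`, exchanging `r` and `ρ` (which fixes the denominator)
gives `∫ P = -2π`.
-/

open Real

theorem norm_circleMap_zero_sub_ofReal_sq (R a φ : ℝ) :
    ‖circleMap 0 R φ - a‖ ^ 2 = R ^ 2 + a ^ 2 - 2 * R * a * cos φ := by
  rw [Complex.sq_norm, Complex.normSq_apply]
  simp only [circleMap, zero_add, Complex.sub_re, Complex.mul_re, Complex.ofReal_re,
    Complex.exp_ofReal_mul_I_re, Complex.ofReal_im, Complex.exp_ofReal_mul_I_im, zero_mul, sub_zero,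
    Complex.sub_im, Complex.mul_im, add_zero]
  nlinarith [sin_sq_add_cos_sq φ]

theorem integral_poissonKernel_ofReal_of_abs_lt {R a : ℝ} (ha : |a| < R) :
    ∫ φ in (0 : ℝ)..(2 * π), (R ^ 2 - a ^ 2) / (R ^ 2 + a ^ 2 - 2 * R * a * cos φ) = 2 * π := by
  have hmean : circleAverage (poissonKernel 0 a • fun _ ↦ (1 : ℂ)) 0 R = 1 :=
    diffContOnCl_const.circleAverage_poissonKernel_smul (by simpa using ha)
  have hkernel : ∀ φ, poissonKernel 0 a (circleMap 0 R φ)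
      = (R ^ 2 - a ^ 2) / (R ^ 2 + a ^ 2 - 2 * R * a * cos φ) := by
    intro φ
    have hR : 0 < R := (abs_nonneg a).trans_lt ha
    simp [poissonKernel_def, norm_circleMap_zero_sub_ofReal_sq, abs_of_pos hR]
  rw [circleAverage_def] at hmean
  simp only [Pi.smul_apply', hkernel, Complex.real_smul, mul_one, intervalIntegral.integral_ofReal,
    ← Complex.ofReal_mul, Complex.ofReal_eq_one] at hmean
  field_simp at hmean
  exact hmean

theorem integral_poissonKernel_ofReal_of_ne {r ρ : ℝ} (hr : 0 ≤ r) (hρ : 0 ≤ ρ) (hne : r ≠ ρ) :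
    ∫ φ in (0 : ℝ)..(2 * π), (r ^ 2 - ρ ^ 2) / (r ^ 2 + ρ ^ 2 - 2 * r * ρ * cos φ)
      = if ρ < r then 2 * π else -(2 * π) := by
  split_ifs with hlt
  · exact integral_poissonKernel_ofReal_of_abs_lt (by rwa [abs_of_nonneg hρ])
  · have hgt : r < ρ := (not_lt.1 hlt).lt_of_ne hne
    calc _ = ∫ φ in (0 : ℝ)..(2 * π), -((ρ ^ 2 - r ^ 2) / (ρ ^ 2 + r ^ 2 - 2 * ρ * r * cos φ)) :=
          intervalIntegral.integral_congr fun φ _ ↦ by ring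
      _ = -(2 * π) := by
          rw [intervalIntegral.integral_neg,
            integral_poissonKernel_ofReal_of_abs_lt (by rwa [abs_of_nonneg hr])]

theorem sub_sq_le_sq_add_sq_sub_mul_cos {a b : ℝ} (hab : 0 ≤ a * b) (φ : ℝ) :
    (a - b) ^ 2 ≤ a ^ 2 + b ^ 2 - 2 * a * b * cos φ := by
  nlinarith [mul_le_mul_of_nonneg_left (cos_le_one φ) hab]

/-- For `r, ρ > 0` with `r ≠ ρ`, the integral
`∫₀^{2π} (2r - 2ρ cos φ)/(r² + ρ² - 2rρ cos φ) dφ` equals `4π/r` if `ρ < r`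
and `0` if `r < ρ`. -/
theorem poisson_kernel_integral (r ρ : ℝ) (hr : 0 < r) (hρ : 0 < ρ) (hne : r ≠ ρ) :
    ∫ φ in (0 : ℝ)..(2 * π),
        (2 * r - 2 * ρ * Real.cos φ) / (r ^ 2 + ρ ^ 2 - 2 * r * ρ * Real.cos φ)
      = if ρ < r then 4 * π / r else 0 := by
  have hD : ∀ φ, r ^ 2 + ρ ^ 2 - 2 * r * ρ * cos φ ≠ 0 := fun φ ↦
    ((sq_pos_of_ne_zero (sub_ne_zero.2 hne)).trans_le
      (sub_sq_le_sq_add_sq_sub_mul_cos (mul_pos hr hρ).le φ)).ne'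
  have hsplit : ∀ φ, (2 * r - 2 * ρ * cos φ) / (r ^ 2 + ρ ^ 2 - 2 * r * ρ * cos φ)
      = r⁻¹ * (1 + (r ^ 2 - ρ ^ 2) / (r ^ 2 + ρ ^ 2 - 2 * r * ρ * cos φ)) := by
    intro φ
    field_simp [hD φ]
    ring
  have hint : IntervalIntegrable (fun φ ↦ (r ^ 2 - ρ ^ 2) / (r ^ 2 + ρ ^ 2 - 2 * r * ρ * cos φ))
      MeasureTheory.volume 0 (2 * π) :=
    (continuous_const.div (by fun_prop) hD).intervalIntegrable _ _
  simp only [hsplit, intervalIntegral.integral_const_mul,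
    intervalIntegral.integral_add intervalIntegrable_const hint, intervalIntegral.integral_const,
    integral_poissonKernel_ofReal_of_ne hr.le hρ.le hne]
  split_ifs
  · field_simp
    ring
  · simp
end

section
/- Suppose F and G are single-valued holomorphic functions on a punctured disk D* = {0 < |z| < ε} such that C'|log|z|²| ≤ (1/4)(|G'(z)|² - |F'(z)|²) ≤ C|log|z|²| for constants C, C' > 0. Then no such pair (F, G) exists; i.e., these growth bounds lead to a contradiction. -/
/-!
Near `0` the lower bound gives `|G'|² - |F'|² → ∞`, hence `|G'| ≥ 1` and `|F'| ≤ |G'|`. By Riemann's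
removable singularity theorem `1 / G'` and `F' / G'` extend holomorphically across `0`, so `G'` and
`F'` are meromorphic at `0`. Restricted to the positive real axis, `φ r = |G' r|² - |F' r|²` is then
a real meromorphic function, hence of the size of `r ^ n` for some `n : ℤ`; but the two bounds say
it is of the size of `log r`, and no power of `r` is: `r ^ n` is bounded for `n ≥ 0` and beats
`log r` for `n < 0`.
-/

open Metric Filter Set Asymptotics Topology

theorem Real.not_isTheta_zpow_log_nhdsGT_zero (n : ℤ) :
    ¬ (fun x : ℝ => x ^ n) =Θ[𝓝[>] 0] Real.log := by
  intro h
  rcases le_or_gt 0 n with hn | hn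
  · have hlog : Tendsto (fun x => ‖Real.log x‖) (𝓝[>] 0) atTop :=
      tendsto_abs_atBot_atTop.comp Real.tendsto_log_nhdsGT_zero
    have hbdd : (fun x : ℝ => x ^ n) =O[𝓝[>] 0] (fun _ => (1 : ℝ)) := by
      lift n to ℕ using hn
      exact (((continuous_pow n).tendsto 0).mono_left nhdsWithin_le_nhds).isBigO_one ℝ
        |>.congr_left fun x => (zpow_natCast x n).symm
    exact isLittleO_irrefl (Frequently.of_forall fun _ => one_ne_zero)
      ((isLittleO_one_left_iff ℝ).2 hlog |>.trans_isBigO h.symm.isBigO |>.trans_isBigO hbdd)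
  · have hpos : ∀ᶠ x in 𝓝[>] (0 : ℝ), 0 < x := self_mem_nhdsWithin
    have hsmall : Real.log =o[𝓝[>] 0] fun x : ℝ => x ^ n :=
      (isLittleO_log_rpow_nhdsGT_zero (by exact_mod_cast hn)).congr' EventuallyEq.rfl
        (hpos.mono fun x _ => Real.rpow_intCast x n)
    refine isLittleO_irrefl ?_ (h.isBigO.trans_isLittleO hsmall)
    exact (hpos.mono fun x hx => zpow_ne_zero n hx.ne').frequently

theorem Asymptotics.isTheta_of_mul_abs_le {α : Type*} {l : Filter α} {f g : α → ℝ} {a b : ℝ}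
    (ha : 0 < a) (h : ∀ᶠ x in l, a * |g x| ≤ f x ∧ f x ≤ b * |g x|) : f =Θ[l] g := by
  have hf : ∀ᶠ x in l, ‖f x‖ = f x :=
    h.mono fun x hx => abs_of_nonneg (le_trans (by positivity) hx.1)
  refine ⟨.of_bound b ?_, .of_bound a⁻¹ ?_⟩
  · filter_upwards [h, hf] with x hx hfx
    rw [hfx, Real.norm_eq_abs]
    exact hx.2
  · filter_upwards [h, hf] with x hx hfx
    rw [hfx, Real.norm_eq_abs, inv_mul_eq_div, le_div_iff₀' ha]
    exact hx.1

theorem Filter.Tendsto.isTheta_one {α 𝕜 E : Type*} [NormedField 𝕜] [NormedAddCommGroup E]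
    {l : Filter α} {g : α → E} {c : E} (hg : Tendsto g l (𝓝 c)) (hc : c ≠ 0) :
    g =Θ[l] fun _ => (1 : 𝕜) := by
  refine IsTheta.trans ⟨isBigO_const_of_tendsto hg hc, ?_⟩ (isTheta_const_const hc one_ne_zero)
  refine (isBigO_const_left_iff_pos_le_norm hc).2 ⟨‖c‖ / 2, by positivity, ?_⟩
  exact (hg.norm.eventually (lt_mem_nhds (half_lt_self (norm_pos_iff.2 hc)))).mono
    fun _ => le_of_lt

theorem MeromorphicAt.isTheta_zpow_meromorphicOrderAt {𝕜 E : Type*} [NontriviallyNormedField 𝕜]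
    [NormedAddCommGroup E] [NormedSpace 𝕜 E] {f : 𝕜 → E} {x : 𝕜} {n : ℤ}
    (hf : MeromorphicAt f x) (hn : meromorphicOrderAt f x = n) :
    f =Θ[𝓝[≠] x] fun z => (z - x) ^ n := by
  obtain ⟨g, hg, hgx, hfg⟩ := (meromorphicOrderAt_eq_int_iff hf).1 hn
  have hg1 : g =Θ[𝓝[≠] x] fun _ => (1 : 𝕜) :=
    (hg.continuousAt.tendsto.mono_left nhdsWithin_le_nhds).isTheta_one hgx
  simpa using EventuallyEq.trans_isTheta hfg ((isTheta_refl (fun z => (z - x) ^ n) _).smul hg1)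

theorem MeromorphicAt.not_isTheta_log {E : Type*} [NormedAddCommGroup E] [NormedSpace ℝ E]
    {φ : ℝ → E} (hφ : MeromorphicAt φ 0) : ¬ φ =Θ[𝓝[>] 0] Real.log := by
  intro h
  have hle : 𝓝[>] (0 : ℝ) ≤ 𝓝[≠] 0 := nhdsWithin_mono _ fun _ hx => ne_of_gt hx
  cases hn : meromorphicOrderAt φ 0 with
  | top =>
    have hφ0 : φ =ᶠ[𝓝[>] 0] 0 := (meromorphicOrderAt_eq_top_iff.1 hn).filter_mono hle
    have hlog0 := isBigO_zero_right_iff.1 (h.symm.isBigO.trans_eventuallyEq hφ0)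
    obtain ⟨x, hx, hx0⟩ := ((Real.tendsto_log_nhdsGT_zero.eventually_ne_atBot 0).and hlog0).exists
    exact hx hx0
  | coe n =>
    refine Real.not_isTheta_zpow_log_nhdsGT_zero n ?_
    simpa using ((hφ.isTheta_zpow_meromorphicOrderAt hn).mono hle).symm.trans h

theorem Complex.meromorphicAt_of_eventually_norm_le {E : Type*} [NormedAddCommGroup E]
    [NormedSpace ℂ E] [CompleteSpace E] {f : ℂ → E} {c : ℂ} {M : ℝ}
    (hd : ∀ᶠ z in 𝓝[≠] c, DifferentiableAt ℂ f z) (hb : ∀ᶠ z in 𝓝[≠] c, ‖f z‖ ≤ M) :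
    MeromorphicAt f c := by
  set g := Function.update f c (limUnder (𝓝[≠] c) f)
  have hfg : f =ᶠ[𝓝[≠] c] g :=
    eventually_mem_nhdsWithin.mono fun z hz => (Function.update_of_ne hz _ _).symm
  have hgd : ∀ᶠ z in 𝓝[≠] c, DifferentiableAt ℂ g z := by
    filter_upwards [hd, self_mem_nhdsWithin] with z hz hzc
    exact hz.congr_of_eventuallyEq <| eventually_of_mem (isOpen_compl_singleton.mem_nhds hzc)
      fun w hw => Function.update_of_ne hw _ _
  have hbc : IsBoundedUnder (· ≤ ·) (𝓝[≠] c) fun z => ‖f z - f c‖ :=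
    ⟨M + ‖f c‖, eventually_map.2 <| hb.mono fun z hz => (norm_sub_le _ _).trans (by linarith)⟩
  have hgc : ContinuousAt g c := continuousAt_update_same.2 <|
    tendsto_limUnder_of_differentiable_on_punctured_nhds_of_bounded_under hd hbc
  exact (analyticAt_of_differentiable_on_punctured_nhds_of_continuousAt hgd hgc).meromorphicAt
    |>.congr hfg.symm

theorem AnalyticAt.norm_sq {F E : Type*} [NormedAddCommGroup F] [NormedSpace ℝ F]
    [NormedAddCommGroup E] [InnerProductSpace ℝ E] {g : F → E} {x : F} (hg : AnalyticAt ℝ g x) :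
    AnalyticAt ℝ (fun y => ‖g y‖ ^ 2) x := by
  convert ((innerSL ℝ).analyticAt_bilinear (g x, g x)).comp₂ hg hg using 2 with y
  rw [innerSL_apply_apply, real_inner_self_eq_norm_sq]

theorem MeromorphicAt.norm_sq {E : Type*} [NormedAddCommGroup E] [InnerProductSpace ℝ E]
    {h : ℝ → E} {x : ℝ} (hh : MeromorphicAt h x) :
    MeromorphicAt (fun r => ‖h r‖ ^ 2) x := by
  obtain ⟨n, g, hg, hhg⟩ := MeromorphicAt.iff_eventuallyEq_zpow_smul_analyticAt.1 hh
  refine MeromorphicAt.iff_eventuallyEq_zpow_smul_analyticAt.2 ⟨2 * n, _, hg.norm_sq, ?_⟩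
  filter_upwards [hhg] with r hr
  rw [hr, norm_smul, mul_pow, Real.norm_eq_abs, sq_abs, smul_eq_mul, mul_comm 2 n, zpow_mul]
  norm_cast

theorem MeromorphicAt.norm_sq_comp_ofReal {f : ℂ → ℂ} {x : ℝ} (hf : MeromorphicAt f x) :
    MeromorphicAt (fun r : ℝ => ‖f r‖ ^ 2) x :=
  MeromorphicAt.norm_sq (h := f ∘ Complex.ofRealCLM) <|
    hf.comp_analyticAt (Complex.ofRealCLM.analyticAt x)

theorem Complex.meromorphicAt_of_le_norm {f : ℂ → ℂ} {c : ℂ} {δ : ℝ} (hδ : 0 < δ)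
    (hd : ∀ᶠ z in 𝓝[≠] c, DifferentiableAt ℂ f z) (hf : ∀ᶠ z in 𝓝[≠] c, δ ≤ ‖f z‖) :
    MeromorphicAt f c := by
  have hf0 : ∀ᶠ z in 𝓝[≠] c, f z ≠ 0 :=
    hf.mono fun z hz => norm_pos_iff.1 (hδ.trans_le hz)
  have hinv : MeromorphicAt f⁻¹ c := by
    refine meromorphicAt_of_eventually_norm_le (M := δ⁻¹) ?_ ?_
    · filter_upwards [hd, hf0] with z hz hz0 using hz.inv hz0
    · filter_upwards [hf] with z hz
      simpa only [Pi.inv_apply, norm_inv] using inv_anti₀ hδ hz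
  simpa using hinv.inv

theorem MeromorphicAt.of_norm_le {f g : ℂ → ℂ} {c : ℂ} (hg : MeromorphicAt g c)
    (hg0 : ∀ᶠ z in 𝓝[≠] c, g z ≠ 0) (hd : ∀ᶠ z in 𝓝[≠] c, DifferentiableAt ℂ f z)
    (hfg : ∀ᶠ z in 𝓝[≠] c, ‖f z‖ ≤ ‖g z‖) : MeromorphicAt f c := by
  have hdiv : MeromorphicAt (f / g) c := by
    refine Complex.meromorphicAt_of_eventually_norm_le (M := 1) ?_ ?_
    · filter_upwards [hd, hg.eventually_analyticAt, hg0] with z hfz hgz hz0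
      exact hfz.div hgz.differentiableAt hz0
    · filter_upwards [hfg, hg0] with z hz hz0
      simpa only [Pi.div_apply, norm_div] using div_le_one_of_le₀ hz (norm_nonneg _)
  refine (hdiv.mul hg).congr ?_
  filter_upwards [hg0] with z hz0
  simp [hz0]

theorem Complex.meromorphicAt_of_tendsto_norm_sq_sub_norm_sq {f g : ℂ → ℂ} {c : ℂ}
    (hf : ∀ᶠ z in 𝓝[≠] c, DifferentiableAt ℂ f z) (hg : ∀ᶠ z in 𝓝[≠] c, DifferentiableAt ℂ g z)
    (h : Tendsto (fun z => ‖g z‖ ^ 2 - ‖f z‖ ^ 2) (𝓝[≠] c) atTop) :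
    MeromorphicAt f c ∧ MeromorphicAt g c := by
  have h1 := h.eventually_ge_atTop 1
  have hg1 : ∀ᶠ z in 𝓝[≠] c, 1 ≤ ‖g z‖ :=
    h1.mono fun z hz => by nlinarith [norm_nonneg (f z), norm_nonneg (g z)]
  have hfg : ∀ᶠ z in 𝓝[≠] c, ‖f z‖ ≤ ‖g z‖ := h1.mono fun z hz =>
    (pow_le_pow_iff_left₀ (norm_nonneg _) (norm_nonneg _) two_ne_zero).1 (by linarith)
  have hgm : MeromorphicAt g c := meromorphicAt_of_le_norm one_pos hg hg1
  exact ⟨hgm.of_norm_le (hg1.mono fun z hz => norm_pos_iff.1 (one_pos.trans_le hz)) hf hfg, hgm⟩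

theorem no_trivial_holonomy_general (ε : ℝ) (hε0 : 0 < ε)
    (F G : ℂ → ℂ) (C C' : ℝ) (hC' : 0 < C')
    (hF : DifferentiableOn ℂ F (ball 0 ε \ {0}))
    (hG : DifferentiableOn ℂ G (ball 0 ε \ {0}))
    (hlow : ∀ z ∈ ball (0 : ℂ) ε \ {0},
      C' * |Real.log (‖z‖ ^ 2)| ≤
        (1 / 4) * (‖deriv G z‖ ^ 2 - ‖deriv F z‖ ^ 2))
    (hhigh : ∀ z ∈ ball (0 : ℂ) ε \ {0},
      (1 / 4) * (‖deriv G z‖ ^ 2 - ‖deriv F z‖ ^ 2) ≤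
        C * |Real.log (‖z‖ ^ 2)|) :
    False := by
  set S := ball (0 : ℂ) ε \ {0}
  have hSo : IsOpen S := isOpen_ball.sdiff isClosed_singleton
  have hS : S ∈ 𝓝[≠] 0 := sdiff_mem_nhdsWithin_compl (ball_mem_nhds 0 hε0) _
  have hbounds : ∀ z ∈ S, 8 * C' * |Real.log ‖z‖| ≤ ‖deriv G z‖ ^ 2 - ‖deriv F z‖ ^ 2 ∧
      ‖deriv G z‖ ^ 2 - ‖deriv F z‖ ^ 2 ≤ 8 * C * |Real.log ‖z‖| := fun z hz => by
    have hlog : |Real.log (‖z‖ ^ 2)| = 2 * |Real.log ‖z‖| := by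
      rw [Real.log_pow, abs_mul]; norm_num
    have hl := hlow z hz
    have hh := hhigh z hz
    rw [hlog] at hl hh
    constructor <;> linarith
  have hdiff {f : ℂ → ℂ} (hf : DifferentiableOn ℂ f S) :
      ∀ᶠ z in 𝓝[≠] 0, DifferentiableAt ℂ (deriv f) z :=
    eventually_of_mem hS fun z hz => (hf.deriv hSo).differentiableAt (hSo.mem_nhds hz)
  have hTop : Tendsto (fun z => ‖deriv G z‖ ^ 2 - ‖deriv F z‖ ^ 2) (𝓝[≠] 0) atTop :=
    tendsto_atTop_mono' _ (eventually_of_mem hS fun z hz => (hbounds z hz).1) <|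
      (tendsto_abs_atBot_atTop.comp (Real.tendsto_log_nhdsGT_zero.comp
        tendsto_norm_nhdsNE_zero)).const_mul_atTop (by positivity)
  obtain ⟨hFm, hGm⟩ :=
    Complex.meromorphicAt_of_tendsto_norm_sq_sub_norm_sq (hdiff hF) (hdiff hG) hTop
  rw [← Complex.ofReal_zero] at hFm hGm
  refine (hGm.norm_sq_comp_ofReal.sub hFm.norm_sq_comp_ofReal).not_isTheta_log <|
    isTheta_of_mul_abs_le (b := 8 * C) (by positivity : 0 < 8 * C') ?_
  filter_upwards [self_mem_nhdsWithin, nhdsWithin_le_nhds (Iio_mem_nhds hε0)]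
    with r (hr : 0 < r) hrε
  have hrS : (r : ℂ) ∈ S := ⟨by simpa [abs_of_pos hr] using hrε, by simpa using hr.ne'⟩
  simpa [Complex.norm_real, Real.norm_of_nonneg hr.le] using hbounds r hrS

/-- There are no single-valued holomorphic functions `F, G` on a punctured disk
`D* = {0 < |z| < ε}` (with `ε < 1`) satisfying the two-sided growth bound
`C' |log|z|²| ≤ (1/4)(|G'|² - |F'|²) ≤ C |log|z|²|` with `C, C' > 0`. -/
theorem no_trivial_holonomy (ε : ℝ) (hε0 : 0 < ε) (hε1 : ε < 1)
    (F G : ℂ → ℂ) (C C' : ℝ) (hC : 0 < C) (hC' : 0 < C')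
    (hF : DifferentiableOn ℂ F (ball 0 ε \ {0}))
    (hG : DifferentiableOn ℂ G (ball 0 ε \ {0}))
    (hlow : ∀ z ∈ ball (0 : ℂ) ε \ {0},
      C' * |Real.log (‖z‖ ^ 2)| ≤
        (1 / 4) * (‖deriv G z‖ ^ 2 - ‖deriv F z‖ ^ 2))
    (hhigh : ∀ z ∈ ball (0 : ℂ) ε \ {0},
      (1 / 4) * (‖deriv G z‖ ^ 2 - ‖deriv F z‖ ^ 2) ≤
        C * |Real.log (‖z‖ ^ 2)|) :
    False :=
  no_trivial_holonomy_general ε hε0 F G C C' hC' hF hG hlow hhigh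
end

section
/- Consider the planar curve α(θ) = ( (cr/4π)[(θ + b₁)cos θ + (L)sin θ], (cr/2)cos θ ) for constants c ≠ 0, b₁ ∈ ℝ, r > 0, and L < 0 with |L| sufficiently large (|L| ≫ 2π and |Θ + b₁| ≪ |L| for a chosen Θ ∈ π/2 + 2πℤ). Then over θ ∈ [Θ, Θ + 2π], the curve α(θ) does not pass through the origin, begins and ends on the line {second coordinate = 0}, and has winding number +1 about the origin (with appropriate orientation determined by sign(c·L)). -/
open Real Set

/-!
Take `Θ = π / 2` and write the curve as `(c r / 2) * w` with
`w θ = (θ + b₁) cos θ / (2π) + L sin θ / (2π) + i cos θ`. The imaginary part `cos θ` of `w` is `≤ 0`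
on `[π/2, 3π/2]`, `≥ 0` on `[3π/2, 5π/2]`, and vanishes only at these three points, where
`w = ±L / (2π)` lies alternately on the negative, positive and negative real axis because `L < 0`.
On each half a branch of `arg` whose cut lies in the open half-plane avoided there is a continuous
angle, running from `-π` to `0` and then from `0` to `π`; glued, they give an angle increasing by
`2π`. Multiplying by the nonzero real `c r / 2` only shifts the angle by `0` or `π`.
-/

open scoped ComplexOrder

def IsContinuousPolarAngle (z : ℝ → ℂ) (ϑ : ℝ → ℝ) (s : Set ℝ) : Prop :=
  ContinuousOn ϑ s ∧ ∀ t ∈ s, z t = ‖z t‖ * Complex.exp (ϑ t * Complex.I)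

namespace IsContinuousPolarAngle

variable {z : ℝ → ℂ} {ϑ : ℝ → ℝ} {s : Set ℝ}

theorem re_im (h : IsContinuousPolarAngle z ϑ s) {t : ℝ} (ht : t ∈ s) :
    (z t).re = √((z t).re ^ 2 + (z t).im ^ 2) * cos (ϑ t) ∧
      (z t).im = √((z t).re ^ 2 + (z t).im ^ 2) * sin (ϑ t) := by
  rw [← Complex.norm_eq_sqrt_sq_add_sq, ← Complex.exp_ofReal_mul_I_re,
    ← Complex.exp_ofReal_mul_I_im, ← Complex.re_ofReal_mul, ← Complex.im_ofReal_mul, ← h.2 t ht]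
  exact ⟨rfl, rfl⟩

theorem neg (h : IsContinuousPolarAngle z ϑ s) :
    IsContinuousPolarAngle (-z) (fun t ↦ ϑ t + π) s := by
  refine ⟨h.1.add continuousOn_const, fun t ht ↦ ?_⟩
  have hpolar := h.2 t ht
  rw [Pi.neg_apply, norm_neg, Complex.ofReal_add, add_mul, Complex.exp_add,
    Complex.exp_pi_mul_I]
  linear_combination -hpolar

theorem ofReal_mul_of_pos {c : ℝ} (hc : 0 < c) (h : IsContinuousPolarAngle z ϑ s) :
    IsContinuousPolarAngle (fun t ↦ c * z t) ϑ s := by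
  refine ⟨h.1, fun t ht ↦ ?_⟩
  have hpolar := h.2 t ht
  rw [norm_mul, Complex.norm_real, Real.norm_of_nonneg hc.le, Complex.ofReal_mul]
  linear_combination (c : ℂ) * hpolar

theorem ofReal_mul {c : ℝ} (hc : c ≠ 0) (h : IsContinuousPolarAngle z ϑ s) :
    IsContinuousPolarAngle (fun t ↦ c * z t) (fun t ↦ ϑ t + if 0 < c then 0 else π) s := by
  split_ifs with hpos
  · simpa using h.ofReal_mul_of_pos hpos
  · have hneg : 0 < -c := neg_pos.2 (lt_of_le_of_ne (not_lt.1 hpos) hc)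
    convert (h.ofReal_mul_of_pos hneg).neg using 1
    ext t
    simp

theorem glue {ϑ₁ ϑ₂ : ℝ → ℝ} {a b c : ℝ} (hab : a ≤ b) (hbc : b ≤ c)
    (h₁ : IsContinuousPolarAngle z ϑ₁ (Icc a b)) (h₂ : IsContinuousPolarAngle z ϑ₂ (Icc b c))
    (hb : ϑ₁ b = ϑ₂ b) :
    IsContinuousPolarAngle z (fun t ↦ if t ≤ b then ϑ₁ t else ϑ₂ t) (Icc a c) := by
  rw [← Icc_union_Icc_eq_Icc hab hbc]
  refine ⟨ContinuousOn.union_of_isClosed ?_ ?_ isClosed_Icc isClosed_Icc, ?_⟩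
  · exact h₁.1.congr fun t ht ↦ if_pos ht.2
  · refine h₂.1.congr fun t ht ↦ ?_
    rcases ht.1.eq_or_lt with rfl | hlt
    · simp [hb]
    · simp [not_le.2 hlt]
  · rintro t (ht | ht)
    · simpa [ht.2] using h₁.2 t ht
    · by_cases htb : t ≤ b
      · simpa [htb, le_antisymm htb ht.1, hb] using h₂.2 t ht
      · simpa [htb] using h₂.2 t ht

end IsContinuousPolarAngle

theorem eq_norm_mul_exp_arg_I_mul_sub_pi_div_two (w : ℂ) :
    w = ‖w‖ * Complex.exp ((Complex.arg (Complex.I * w) - π / 2 : ℝ) * Complex.I) := by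
  have h := Complex.norm_mul_exp_arg_mul_I (Complex.I * w)
  rw [norm_mul, Complex.norm_I, one_mul] at h
  rw [Complex.ofReal_sub, sub_mul, Complex.exp_sub, Complex.ofReal_div, Complex.ofReal_ofNat,
    Complex.exp_pi_div_two_mul_I, mul_div_assoc', h, mul_div_cancel_left₀ _ Complex.I_ne_zero]

theorem exists_isContinuousPolarAngle_of_im_nonpos {z : ℝ → ℂ} {a b : ℝ}
    (hz : ContinuousOn z (Icc a b)) (hz0 : ∀ t ∈ Icc a b, z t ≠ 0)
    (him : ∀ t ∈ Icc a b, (z t).im ≤ 0) (ha : z a < 0) (hb : 0 < z b) :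
    ∃ ϑ, IsContinuousPolarAngle z ϑ (Icc a b) ∧ ϑ a = -π ∧ ϑ b = 0 := by
  simp only [Complex.lt_def, Complex.zero_re, Complex.zero_im] at ha hb
  refine ⟨fun t ↦ Complex.arg (Complex.I * z t) - π / 2, ⟨?_, fun t _ ↦
    eq_norm_mul_exp_arg_I_mul_sub_pi_div_two (z t)⟩, ?_, ?_⟩
  · refine (Complex.continuousOn_arg.comp (continuousOn_const.mul hz) fun t ht ↦ ?_).sub
      continuousOn_const
    rw [Pi.mul_apply, Complex.mem_slitPlane_iff, Complex.I_mul_re, Complex.I_mul_im]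
    rcases (him t ht).lt_or_eq with hlt | heq
    · exact Or.inl (by linarith)
    · exact Or.inr fun hre ↦ hz0 t ht (Complex.ext hre heq)
  · have : Complex.arg (Complex.I * z a) = -(π / 2) := by
      rw [Complex.arg_eq_neg_pi_div_two_iff, Complex.I_mul_re, Complex.I_mul_im]
      exact ⟨by rw [ha.2, neg_zero], ha.1⟩
    simp only [this]
    ring
  · have : Complex.arg (Complex.I * z b) = π / 2 := by
      rw [Complex.arg_eq_pi_div_two_iff, Complex.I_mul_re, Complex.I_mul_im]
      exact ⟨by rw [← hb.2, neg_zero], hb.1⟩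
    simp only [this]
    ring

theorem exists_isContinuousPolarAngle_of_im_nonneg {z : ℝ → ℂ} {a b : ℝ}
    (hz : ContinuousOn z (Icc a b)) (hz0 : ∀ t ∈ Icc a b, z t ≠ 0)
    (him : ∀ t ∈ Icc a b, 0 ≤ (z t).im) (ha : 0 < z a) (hb : z b < 0) :
    ∃ ϑ, IsContinuousPolarAngle z ϑ (Icc a b) ∧ ϑ a = 0 ∧ ϑ b = π := by
  obtain ⟨ϑ, hϑ, hϑa, hϑb⟩ := exists_isContinuousPolarAngle_of_im_nonpos (z := -z) hz.neg
    (fun t ht ↦ neg_ne_zero.2 (hz0 t ht)) (fun t ht ↦ by simpa using him t ht)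
    (by simpa using ha) (by simpa using hb)
  have hpolar := hϑ.neg
  rw [neg_neg] at hpolar
  exact ⟨_, hpolar, by simp [hϑa], by simp [hϑb]⟩

theorem exists_isContinuousPolarAngle_sub_eq_two_pi {z : ℝ → ℂ} {a b c : ℝ} (hab : a ≤ b)
    (hbc : b ≤ c) (hz : ContinuousOn z (Icc a c)) (hz0 : ∀ t ∈ Icc a c, z t ≠ 0)
    (him₁ : ∀ t ∈ Icc a b, (z t).im ≤ 0) (him₂ : ∀ t ∈ Icc b c, 0 ≤ (z t).im)
    (ha : z a < 0) (hb : 0 < z b) (hc : z c < 0) :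
    ∃ ϑ, IsContinuousPolarAngle z ϑ (Icc a c) ∧ ϑ c - ϑ a = 2 * π := by
  have hsub₁ : Icc a b ⊆ Icc a c := Icc_subset_Icc_right hbc
  have hsub₂ : Icc b c ⊆ Icc a c := Icc_subset_Icc_left hab
  obtain ⟨ϑ₁, h₁, h₁a, h₁b⟩ := exists_isContinuousPolarAngle_of_im_nonpos (hz.mono hsub₁)
    (fun t ht ↦ hz0 t (hsub₁ ht)) him₁ ha hb
  obtain ⟨ϑ₂, h₂, h₂b, h₂c⟩ := exists_isContinuousPolarAngle_of_im_nonneg (hz.mono hsub₂)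
    (fun t ht ↦ hz0 t (hsub₂ ht)) him₂ hb hc
  refine ⟨_, h₁.glue hab hbc h₂ (h₁b.trans h₂b.symm), ?_⟩
  have hcb : ¬ c ≤ b := fun hcb ↦ lt_asymm hb (by rwa [le_antisymm hbc hcb])
  simp only [hab, hcb, ↓reduceIte, h₁a, h₂c]
  ring

noncomputable def modelCurve (p b₁ L θ : ℝ) : ℂ :=
  ↑(p * ((θ + b₁) * cos θ + L * sin θ)) + ↑(cos θ) * Complex.I

variable {p b₁ L : ℝ}

@[simp]
theorem modelCurve_re (θ : ℝ) :
    (modelCurve p b₁ L θ).re = p * ((θ + b₁) * cos θ + L * sin θ) := by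
  simp only [modelCurve, Complex.add_re, Complex.ofReal_re, Complex.re_ofReal_mul, Complex.I_re,
    mul_zero, add_zero]

@[simp]
theorem modelCurve_im (θ : ℝ) : (modelCurve p b₁ L θ).im = cos θ := by
  simp only [modelCurve, Complex.add_im, Complex.ofReal_im, Complex.im_ofReal_mul, Complex.I_im,
    mul_one, zero_add]

theorem modelCurve_ne_zero (hp : p ≠ 0) (hL : L ≠ 0) (θ : ℝ) : modelCurve p b₁ L θ ≠ 0 := by
  intro h
  have hcos : cos θ = 0 := by simpa using congrArg Complex.im h
  have hsin : sin θ ≠ 0 := by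
    intro hsin
    simpa [hsin, hcos] using sin_sq_add_cos_sq θ
  have hre : p * ((θ + b₁) * cos θ + L * sin θ) = 0 := by simpa using congrArg Complex.re h
  simp [hcos, hp, hL, hsin] at hre

theorem exists_isContinuousPolarAngle_modelCurve (hp : 0 < p) (hL : L < 0) :
    ∃ ϑ, IsContinuousPolarAngle (modelCurve p b₁ L) ϑ (Icc (π / 2) (π / 2 + 2 * π)) ∧
      ϑ (π / 2 + 2 * π) - ϑ (π / 2) = 2 * π := by
  have hpL : p * L < 0 := mul_neg_of_pos_of_neg hp hL
  refine exists_isContinuousPolarAngle_sub_eq_two_pi (b := π / 2 + π) (by linarith [pi_pos])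
    (by linarith [pi_pos]) ?_ (fun t _ ↦ modelCurve_ne_zero hp.ne' hL.ne t) ?_ ?_ ?_ ?_ ?_
  · exact Continuous.continuousOn (by unfold modelCurve; fun_prop)
  · exact fun t ht ↦ (modelCurve_im t).trans_le <| cos_nonpos_of_pi_div_two_le_of_le ht.1 (by linarith [ht.2])
  · intro t ht
    rw [modelCurve_im, ← cos_sub_two_pi]
    exact cos_nonneg_of_mem_Icc ⟨by linarith [ht.1], by linarith [ht.2]⟩
  · simp [Complex.lt_def, hpL]
  · simp [Complex.lt_def, hpL]
  · simp [Complex.lt_def, hpL]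

/-- Consider the planar curve
`α(θ) = ((cr/4π)[(θ + b₁) cos θ + L sin θ], (cr/2) cos θ)` with `c ≠ 0`,
`r > 0`, and `L < 0` with `|L|` sufficiently large.  For a suitable
`Θ ∈ π/2 + 2πℤ` (with `|Θ + b₁| ≪ |L|`), over `θ ∈ [Θ, Θ + 2π]` the curve
avoids the origin, begins and ends on the line `{second coordinate = 0}`, and
has winding number `+1` about the origin: a continuous angle function `ϑ`
realizing `α` in polar form increases by exactly `2π`. -/
theorem winding_number_plus_one (c b₁ r : ℝ) (hc : c ≠ 0) (hr : 0 < r) :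
    ∃ L₀ : ℝ, 0 < L₀ ∧ ∀ L : ℝ, L ≤ -L₀ →
      ∃ Θ : ℝ, (∃ m : ℤ, Θ = π / 2 + 2 * π * m) ∧
        (c * r / 2) * Real.cos Θ = 0 ∧
        (c * r / 2) * Real.cos (Θ + 2 * π) = 0 ∧
        (∀ θ ∈ Icc Θ (Θ + 2 * π),
          ((c * r / (4 * π)) * ((θ + b₁) * Real.cos θ + L * Real.sin θ),
            (c * r / 2) * Real.cos θ) ≠ ((0 : ℝ), (0 : ℝ))) ∧
        ∃ ϑ : ℝ → ℝ, ContinuousOn ϑ (Icc Θ (Θ + 2 * π)) ∧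
          (∀ θ ∈ Icc Θ (Θ + 2 * π),
            (c * r / (4 * π)) * ((θ + b₁) * Real.cos θ + L * Real.sin θ)
              = Real.sqrt (((c * r / (4 * π)) * ((θ + b₁) * Real.cos θ + L * Real.sin θ)) ^ 2
                  + ((c * r / 2) * Real.cos θ) ^ 2) * Real.cos (ϑ θ) ∧
            (c * r / 2) * Real.cos θ
              = Real.sqrt (((c * r / (4 * π)) * ((θ + b₁) * Real.cos θ + L * Real.sin θ)) ^ 2
                  + ((c * r / 2) * Real.cos θ) ^ 2) * Real.sin (ϑ θ)) ∧
          ϑ (Θ + 2 * π) - ϑ Θ = 2 * π := by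
  refine ⟨1, one_pos, fun L hL ↦ ⟨π / 2, ⟨0, by simp⟩, by simp, by simp, ?_⟩⟩
  have hL0 : L < 0 := by linarith
  have hcr : c * r / 2 ≠ 0 := by positivity
  set z : ℝ → ℂ := fun θ ↦ (c * r / 2 : ℝ) * modelCurve (1 / (2 * π)) b₁ L θ
  have hre : ∀ θ, (z θ).re = c * r / (4 * π) * ((θ + b₁) * cos θ + L * sin θ) := fun θ ↦ by
    simp only [z, Complex.re_ofReal_mul, modelCurve_re]
    field_simp
    ring
  have him : ∀ θ, (z θ).im = c * r / 2 * cos θ := fun θ ↦ by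
    simp only [z, Complex.im_ofReal_mul, modelCurve_im]
  have hz0 : ∀ θ, z θ ≠ 0 := fun θ ↦
    mul_ne_zero (Complex.ofReal_ne_zero.2 hcr) (modelCurve_ne_zero (by positivity) hL0.ne θ)
  obtain ⟨ϑ, hϑ, hwind⟩ :=
    exists_isContinuousPolarAngle_modelCurve (b₁ := b₁) (p := 1 / (2 * π)) (by positivity) hL0
  have hϑz := hϑ.ofReal_mul hcr
  refine ⟨fun θ _ h ↦ hz0 θ (Complex.ext ?_ ?_), _, hϑz.1, fun θ hθ ↦ ?_, ?_⟩
  · simpa [hre] using congrArg Prod.fst h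
  · simpa [him] using congrArg Prod.snd h
  · rw [← hre, ← him]
    exact hϑz.re_im hθ
  · simpa using hwind
end
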